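/- With s = s₁/s₂ generic and j ≥ 0, the two expressions ζ^j · ₄φ₃(s q^{2j} t^{-1}, s^{1/2} q^{j+1} t^{-1/2}, -s^{1/2} q^{j+1} t^{-1/2}, t^{-1}; s^{1/2} q^{j} t^{-1/2}, -s^{1/2} q^{j} t^{-1/2}, s q^{2j+1}; q, tζ) and ζ^j (1-ζ) · ₂φ₁(q t^{-1}, s q^{2j+1} t^{-1}; s q^{2j+1}; q, tζ) are equal as formal power series in ζ. -/
import Mathlib

/-- The q-shifted factorial `(a;q)_n = ∏_{k=0}^{n-1} (1 - a q^k)`. -/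
def qp (q a : ℂ) (n : ℕ) : ℂ := ∏ k ∈ Finset.range n, (1 - a * q ^ k)

lemma qp_succ (q a : ℂ) (n : ℕ) : qp q a (n + 1) = qp q a n * (1 - a * q ^ n) :=
  Finset.prod_range_succ _ _

lemma qp_succ' (q a : ℂ) (n : ℕ) : qp q a (n + 1) = (1 - a) * qp q (a * q) n := by
  simp only [qp, Finset.prod_range_succ', pow_zero, mul_one]
  rw [mul_comm]
  congr 1
  exact Finset.prod_congr rfl fun k _ => by ring

lemma qp_pair (q c : ℂ) (n : ℕ) : qp q c n * qp q (-c) n = qp (q ^ 2) (c ^ 2) n := by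
  simp only [qp, ← Finset.prod_mul_distrib]
  exact Finset.prod_congr rfl fun k _ => by ring

lemma qp_tel (q a : ℂ) (n : ℕ) :
    (1 - a) * qp (q ^ 2) (a * q ^ 2) n = qp (q ^ 2) a n * (1 - a * (q ^ 2) ^ n) := by
  rw [← qp_succ', qp_succ]

lemma key (q t a : ℂ) (ht : t ≠ 0) (n : ℕ)
    (h1 : qp (q ^ 2) a (n + 1) ≠ 0)
    (h2 : qp q (a * t * q) (n + 1) ≠ 0)
    (h3 : qp q q (n + 1) ≠ 0) :
    qp q a (n + 1) * qp (q ^ 2) (a * q ^ 2) (n + 1) * qp q t⁻¹ (n + 1)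
        / (qp (q ^ 2) a (n + 1) * qp q (a * t * q) (n + 1) * qp q q (n + 1)) * t ^ (n + 1)
      = qp q (q * t⁻¹) (n + 1) * qp q (a * q) (n + 1)
            / (qp q (a * t * q) (n + 1) * qp q q (n + 1)) * t ^ (n + 1)
          - qp q (q * t⁻¹) n * qp q (a * q) n / (qp q (a * t * q) n * qp q q n) * t ^ n := by
  have hb : qp q (a * t * q) n ≠ 0 := by
    rw [qp_succ] at h2; exact left_ne_zero_of_mul h2
  have hbf : (1 - a * t * q * q ^ n) ≠ 0 := by
    rw [qp_succ] at h2; exact right_ne_zero_of_mul h2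
  have hqn : qp q q n ≠ 0 := by
    rw [qp_succ] at h3; exact left_ne_zero_of_mul h3
  have hqf : (1 - q * q ^ n) ≠ 0 := by
    rw [qp_succ] at h3; exact right_ne_zero_of_mul h3
  have key2 : qp q t⁻¹ (n + 1) = (1 - t⁻¹) * qp q (q * t⁻¹) n := by
    rw [qp_succ', mul_comm t⁻¹ q]
  have key1 : qp q a (n + 1) * qp (q ^ 2) (a * q ^ 2) (n + 1)
      = qp q (a * q) n * (qp (q ^ 2) a (n + 1) * (1 - a * (q ^ n) ^ 2 * q ^ 2)) := by
    rw [qp_succ' q a n, mul_right_comm]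
    rw [qp_tel q a (n + 1)]
    ring
  rw [key1, key2, qp_succ q (a*q), qp_succ q (q*t⁻¹), qp_succ q (a*t*q), qp_succ q q]
  set A1 := qp (q ^ 2) a (n + 1) with hA1
  set P := qp q (a * q) n with hP
  set Q := qp q (q * t⁻¹) n with hQ
  set B := qp q (a * t * q) n with hB
  set C := qp q q n with hC
  set e := q ^ n with he
  have hD1 : A1 * (B * (1 - a * t * q * e)) * (C * (1 - q * e)) ≠ 0 :=
    mul_ne_zero (mul_ne_zero h1 (mul_ne_zero hb hbf)) (mul_ne_zero hqn hqf)
  have hD2 : B * (1 - a * t * q * e) * (C * (1 - q * e)) ≠ 0 :=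
    mul_ne_zero (mul_ne_zero hb hbf) (mul_ne_zero hqn hqf)
  have hD3 : B * C ≠ 0 := mul_ne_zero hb hqn
  rw [div_mul_eq_mul_div, div_mul_eq_mul_div, div_mul_eq_mul_div,
    div_sub_div _ _ hD2 hD3, div_eq_div_iff hD1 (mul_ne_zero hD2 hD3)]
  field_simp
  ring

/-- The two expressions for the eigenfunction `f_j`,
`ζ^j·₄φ₃(sq^{2j}t^{-1}, s^{1/2}q^{j+1}t^{-1/2}, -s^{1/2}q^{j+1}t^{-1/2}, t^{-1};
          s^{1/2}q^{j}t^{-1/2}, -s^{1/2}q^{j}t^{-1/2}, sq^{2j+1}; q, tζ)`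
and `ζ^j(1-ζ)·₂φ₁(qt^{-1}, sq^{2j+1}t^{-1}; sq^{2j+1}; q, tζ)`,
agree as formal power series in `ζ`. -/
theorem stmt16 (q t s rs rt : ℂ) (hrs : rs ^ 2 = s) (hrt : rt ^ 2 = t)
    (hq : q ≠ 0) (ht : t ≠ 0) (hs : s ≠ 0) (j : ℕ)
    (hden : ∀ n, qp q (rs * q ^ j * rt⁻¹) n ≠ 0
      ∧ qp q (-(rs * q ^ j * rt⁻¹)) n ≠ 0
      ∧ qp q (s * q ^ (2 * j + 1)) n ≠ 0 ∧ qp q q n ≠ 0) :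
    (PowerSeries.X : PowerSeries ℂ) ^ j
        * PowerSeries.mk (fun n =>
            qp q (s * q ^ (2 * j) * t⁻¹) n * qp q (rs * q ^ (j + 1) * rt⁻¹) n
              * qp q (-(rs * q ^ (j + 1) * rt⁻¹)) n * qp q t⁻¹ n
              / (qp q (rs * q ^ j * rt⁻¹) n * qp q (-(rs * q ^ j * rt⁻¹)) n
                  * qp q (s * q ^ (2 * j + 1)) n * qp q q n)
              * (t : ℂ) ^ n)
    = (PowerSeries.X : PowerSeries ℂ) ^ j * (1 - PowerSeries.X)
        * PowerSeries.mk (fun n =>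
            qp q (q * t⁻¹) n * qp q (s * q ^ (2 * j + 1) * t⁻¹) n
              / (qp q (s * q ^ (2 * j + 1)) n * qp q q n)
              * (t : ℂ) ^ n) := by
  have hrt0 : rt ≠ 0 := fun h => ht (by rw [← hrt, h]; ring)
  have e1 : (rs * q ^ (j + 1) * rt⁻¹) ^ 2 = s * q ^ (2 * j) * t⁻¹ * q ^ 2 := by
    rw [← hrs, ← hrt]
    field_simp
    ring
  have e2 : (rs * q ^ j * rt⁻¹) ^ 2 = s * q ^ (2 * j) * t⁻¹ := by
    rw [← hrs, ← hrt]
    field_simp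
    ring
  have e3 : s * q ^ (2 * j) * t⁻¹ * t * q = s * q ^ (2 * j + 1) := by
    field_simp
    ring
  have e4 : s * q ^ (2 * j) * t⁻¹ * q = s * q ^ (2 * j + 1) * t⁻¹ := by
    ring
  rw [mul_assoc ((PowerSeries.X : PowerSeries ℂ) ^ j) (1 - PowerSeries.X)]
  refine congrArg (fun y => (PowerSeries.X : PowerSeries ℂ) ^ j * y) ?_
  ext n
  rw [PowerSeries.coeff_mk, sub_mul, one_mul, map_sub, PowerSeries.coeff_mk]
  cases n with
  | zero =>
    simp [qp]
  | succ n =>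
    rw [PowerSeries.coeff_succ_X_mul, PowerSeries.coeff_mk]
    rw [mul_assoc (qp q (s * q ^ (2 * j) * t⁻¹) (n + 1)), qp_pair, e1,
      qp_pair q (rs * q ^ j * rt⁻¹) (n + 1), e2, ← e3]
    have e5 : s * q ^ (2 * j) * t⁻¹ * t * q * t⁻¹ = s * q ^ (2 * j) * t⁻¹ * q := by
      field_simp
    rw [e5]
    have h1 : qp (q ^ 2) (s * q ^ (2 * j) * t⁻¹) (n + 1) ≠ 0 := by
      rw [← e2, ← qp_pair]
      exact mul_ne_zero (hden (n + 1)).1 (hden (n + 1)).2.1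
    have h2 : qp q (s * q ^ (2 * j) * t⁻¹ * t * q) (n + 1) ≠ 0 := by
      rw [e3]; exact (hden (n + 1)).2.2.1
    exact key q t (s * q ^ (2 * j) * t⁻¹) ht n h1 h2 (hden (n + 1)).2.2.2
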